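/- arXiv:2503.09848 — 5 statements merged into one kernel-verified Lean document; each statement's English description precedes it below -/
import Mathlib

section
/- Let σ > 0, let m̄ ∈ ℝ, let K > 0, and define f∞ : (-1,1) → ℝ by f∞(v) = K·(1+v)^(−2+m̄/(2σ²))·(1−v)^(−2−m̄/(2σ²))·exp(−(1−m̄·v)/(σ²·(1−v²))). Then f∞ satisfies the zero-flux stationary equation of the Fokker–Planck equation ∂_t f = −∂_v((m̄−v)f) + (σ²/2)∂²_v((1−v²)²f); that is, for every v ∈ (−1,1), (m̄ − v)·f∞(v) = (σ²/2)·(d/dv)[(1−v²)²·f∞(v)]. In particular f∞ is a stationary solution of this Fokker–Planck equation. -/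
/-!
On `(-1, 1)` the weighted density `(1 - v²)² f∞` equals `K exp Φ`, where
`Φ(v) = m̄/(2σ²) (log (1 + v) - log (1 - v)) - (1 - m̄ v)/(σ² (1 - v²))` and
`Φ'(v) = 2 (m̄ - v)/(σ² (1 - v²)²)`. Hence `((1 - v²)² f∞)' = Φ' (1 - v²)² f∞ = (2/σ²)(m̄ - v) f∞`,
which is the zero-flux equation.
-/

open Real Set

noncomputable def stationaryPotential (σ m w : ℝ) : ℝ :=
  m / (2 * σ ^ 2) * (log (1 + w) - log (1 - w)) - (1 - m * w) / (σ ^ 2 * (1 - w ^ 2))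

theorem hasDerivAt_stationaryPotential {σ m v : ℝ} (hσ : σ ≠ 0) (hv : v ∈ Ioo (-1 : ℝ) 1) :
    HasDerivAt (stationaryPotential σ m) (2 * (m - v) / (σ ^ 2 * (1 - v ^ 2) ^ 2)) v := by
  obtain ⟨hv₁, hv₂⟩ := hv
  have hplus : 1 + v ≠ 0 := by linarith
  have hminus : 1 - v ≠ 0 := by linarith
  have hsq : 1 - v ^ 2 ≠ 0 := by nlinarith
  have hden : σ ^ 2 * (1 - v ^ 2) ≠ 0 := mul_ne_zero (pow_ne_zero 2 hσ) hsq
  have hlog := (((hasDerivAt_id v).const_add 1).log hplus).sub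
    (((hasDerivAt_id v).const_sub 1).log hminus)
  have hquot := (((hasDerivAt_id v).const_mul m).const_sub 1).div
    (((hasDerivAt_pow 2 v).const_sub 1).const_mul (σ ^ 2)) hden
  refine HasDerivAt.congr_deriv (f := stationaryPotential σ m)
    ((hlog.const_mul (m / (2 * σ ^ 2))).sub hquot) ?_
  simp only [id]
  field_simp
  ring

theorem sq_mul_rpow_neg_two_add {x : ℝ} (hx : 0 < x) (a : ℝ) : x ^ 2 * x ^ (-2 + a) = x ^ a := by
  rw [rpow_add hx, ← mul_assoc, rpow_neg hx.le, rpow_two, mul_inv_cancel₀ (by positivity), one_mul]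

theorem sq_mul_rpow_neg_two_sub {x : ℝ} (hx : 0 < x) (a : ℝ) : x ^ 2 * x ^ (-2 - a) = x ^ (-a) := by
  rw [sub_eq_add_neg, sq_mul_rpow_neg_two_add hx]

theorem one_sub_sq_sq_mul_stationary_eq {σ m K w : ℝ} (hw : w ∈ Ioo (-1 : ℝ) 1) :
    (1 - w ^ 2) ^ 2 * (K * (1 + w) ^ (-2 + m / (2 * σ ^ 2)) * (1 - w) ^ (-2 - m / (2 * σ ^ 2)) *
      exp (-(1 - m * w) / (σ ^ 2 * (1 - w ^ 2)))) = K * exp (stationaryPotential σ m w) := by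
  obtain ⟨hw₁, hw₂⟩ := hw
  have hplus : 0 < 1 + w := by linarith
  have hminus : 0 < 1 - w := by linarith
  have hsplit : (1 - w ^ 2) ^ 2 = (1 + w) ^ 2 * (1 - w) ^ 2 := by ring
  rw [hsplit, stationaryPotential]
  calc (1 + w) ^ 2 * (1 - w) ^ 2 * (K * (1 + w) ^ (-2 + m / (2 * σ ^ 2)) *
        (1 - w) ^ (-2 - m / (2 * σ ^ 2)) * exp (-(1 - m * w) / (σ ^ 2 * (1 - w ^ 2))))
      = K * ((1 + w) ^ 2 * (1 + w) ^ (-2 + m / (2 * σ ^ 2))) *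
        ((1 - w) ^ 2 * (1 - w) ^ (-2 - m / (2 * σ ^ 2))) *
          exp (-(1 - m * w) / (σ ^ 2 * (1 - w ^ 2))) := by ring
    _ = _ := by
      rw [sq_mul_rpow_neg_two_add hplus, sq_mul_rpow_neg_two_sub hminus,
        rpow_def_of_pos hplus, rpow_def_of_pos hminus, mul_assoc, mul_assoc,
        ← exp_add, ← exp_add]
      congr 2
      ring

theorem stationary_solution_zero_flux_general
    (σ m K : ℝ) (hσ : 0 < σ) (f : ℝ → ℝ)
    (hf : ∀ v : ℝ, f v =
      K * (1 + v) ^ (-2 + m / (2 * σ ^ 2)) * (1 - v) ^ (-2 - m / (2 * σ ^ 2)) *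
        Real.exp (-(1 - m * v) / (σ ^ 2 * (1 - v ^ 2)))) :
    ∀ v ∈ Set.Ioo (-1 : ℝ) 1,
      (m - v) * f v = σ ^ 2 / 2 * deriv (fun w => (1 - w ^ 2) ^ 2 * f w) v := by
  intro v hv
  have hweighted : (fun w => (1 - w ^ 2) ^ 2 * f w) =ᶠ[nhds v]
      fun w => K * exp (stationaryPotential σ m w) := by
    filter_upwards [isOpen_Ioo.mem_nhds hv] with w hw
    rw [hf, one_sub_sq_sq_mul_stationary_eq hw]
  have hderiv := ((hasDerivAt_stationaryPotential (m := m) hσ.ne' hv).exp.const_mul K)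
  have hsq : 1 - v ^ 2 ≠ 0 := by nlinarith [hv.1, hv.2]
  rw [hweighted.deriv_eq, hderiv.deriv, ← mul_assoc K,
    ← one_sub_sq_sq_mul_stationary_eq hv, ← hf]
  field_simp

/-- The function `f∞(v) = K (1+v)^(−2+m̄/(2σ²)) (1−v)^(−2−m̄/(2σ²)) exp(−(1−m̄v)/(σ²(1−v²)))`
satisfies the zero-flux stationary equation of the Fokker–Planck equation
`∂_t f = −∂_v((m̄−v)f) + (σ²/2)∂²_v((1−v²)²f)` on `(−1,1)`. -/
theorem stationary_solution_zero_flux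
    (σ m K : ℝ) (hσ : 0 < σ) (hK : 0 < K) (f : ℝ → ℝ)
    (hf : ∀ v : ℝ, f v =
      K * (1 + v) ^ (-2 + m / (2 * σ ^ 2)) * (1 - v) ^ (-2 - m / (2 * σ ^ 2)) *
        Real.exp (-(1 - m * v) / (σ ^ 2 * (1 - v ^ 2)))) :
    ∀ v ∈ Set.Ioo (-1 : ℝ) 1,
      (m - v) * f v = σ ^ 2 / 2 * deriv (fun w => (1 - w ^ 2) ^ 2 * f w) v :=
  stationary_solution_zero_flux_general σ m K hσ f hf
end

section
/- Let σ > 0, let m̄ ∈ ℝ with |m̄| < 1, and define f∞ : (-1,1) → ℝ by f∞(v) = (1+v)^(−2+m̄/(2σ²))·(1−v)^(−2−m̄/(2σ²))·exp(−(1−m̄·v)/(σ²·(1−v²))). Then f∞(v) > 0 for every v ∈ (−1,1) and f∞ is integrable on (−1,1); consequently there exists a constant K∞ > 0 such that K∞·f∞ is a probability density on (−1,1). -/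
/-!
Since `1 - m v ≥ 1 - |m| > 0` and `2 / (1 - v²) = 1 / (1 + v) + 1 / (1 - v)`, the exponential
factor is at most `exp (-δ / (1 + v)) · exp (-δ / (1 - v))` with `δ = (1 - |m|) / (2σ²) > 0`.
Each factor `x ^ c · exp (-δ / x)` stays bounded as `x → 0⁺`, whatever the exponent `c`, so the
profile is bounded on `(-1, 1)`; a bounded measurable function on a set of finite measure is
integrable, and a positive integrable function can be normalised.
-/

open Real MeasureTheory Set
open scoped Nat

lemma Real.exp_neg_le_factorial_div_pow {y : ℝ} (hy : 0 < y) (n : ℕ) :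
    exp (-y) ≤ n ! / y ^ n := by
  rw [exp_neg, ← inv_div]
  exact inv_anti₀ (by positivity) (pow_div_factorial_le_exp _ hy.le n)

lemma Real.exists_forall_rpow_mul_exp_neg_div_le (c : ℝ) {δ : ℝ} (hδ : 0 < δ) (b : ℝ) :
    ∃ C, ∀ x ∈ Ioc 0 b, x ^ c * exp (-(δ / x)) ≤ C := by
  obtain ⟨n, hn⟩ := exists_nat_ge (-c)
  refine ⟨n ! / δ ^ n * b ^ (c + n), fun x ⟨hx, hxb⟩ ↦ ?_⟩
  calc x ^ c * exp (-(δ / x))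
      ≤ x ^ c * (n ! / (δ / x) ^ n) := by
        gcongr
        exact exp_neg_le_factorial_div_pow (by positivity) n
    _ = n ! / δ ^ n * x ^ (c + n) := by
        rw [rpow_add hx, rpow_natCast, div_pow]
        field_simp
    _ ≤ n ! / δ ^ n * b ^ (c + n) := by
        gcongr
        linarith

lemma neg_div_mul_one_sub_sq_le {σ m v : ℝ} (hσ : σ ≠ 0) (hv : v ∈ Ioo (-1 : ℝ) 1) :
    -(1 - m * v) / (σ ^ 2 * (1 - v ^ 2)) ≤
      -((1 - |m|) / (2 * σ ^ 2) / (1 + v)) + -((1 - |m|) / (2 * σ ^ 2) / (1 - v)) := by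
  obtain ⟨hv₁, hv₂⟩ := hv
  have hp : 0 < 1 + v := by linarith
  have hn : 0 < 1 - v := by linarith
  have hmv : m * v ≤ |m| := by
    calc m * v ≤ |m * v| := le_abs_self _
      _ = |m| * |v| := abs_mul m v
      _ ≤ |m| := mul_le_of_le_one_right (abs_nonneg m) (abs_le.2 ⟨hv₁.le, hv₂.le⟩)
  rw [show 1 - v ^ 2 = (1 + v) * (1 - v) by ring]
  calc -(1 - m * v) / (σ ^ 2 * ((1 + v) * (1 - v)))
      ≤ -(1 - |m|) / (σ ^ 2 * ((1 + v) * (1 - v))) := by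
        gcongr
    _ = _ := by
        field_simp
        ring

lemma exists_forall_rpow_mul_rpow_mul_exp_le (a b : ℝ) {σ m : ℝ} (hσ : σ ≠ 0) (hm : |m| < 1) :
    ∃ C, ∀ v ∈ Ioo (-1 : ℝ) 1,
      (1 + v) ^ a * (1 - v) ^ b * exp (-(1 - m * v) / (σ ^ 2 * (1 - v ^ 2))) ≤ C := by
  set δ := (1 - |m|) / (2 * σ ^ 2)
  have hδ : 0 < δ := div_pos (by linarith) (by positivity)
  obtain ⟨C₁, hC₁⟩ := exists_forall_rpow_mul_exp_neg_div_le a hδ 2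
  obtain ⟨C₂, hC₂⟩ := exists_forall_rpow_mul_exp_neg_div_le b hδ 2
  refine ⟨C₁ * C₂, fun v hv ↦ ?_⟩
  obtain ⟨hv₁, hv₂⟩ := hv
  have hp : 0 < 1 + v := by linarith
  have hn : 0 < 1 - v := by linarith
  calc (1 + v) ^ a * (1 - v) ^ b * exp (-(1 - m * v) / (σ ^ 2 * (1 - v ^ 2)))
      ≤ (1 + v) ^ a * (1 - v) ^ b * exp (-(δ / (1 + v)) + -(δ / (1 - v))) := by
        gcongr
        exact neg_div_mul_one_sub_sq_le hσ ⟨hv₁, hv₂⟩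
    _ = ((1 + v) ^ a * exp (-(δ / (1 + v)))) * ((1 - v) ^ b * exp (-(δ / (1 - v)))) := by
        rw [exp_add]
        ring
    _ ≤ C₁ * C₂ := by
        have hle₁ := hC₁ (1 + v) ⟨hp, by linarith⟩
        exact mul_le_mul hle₁ (hC₂ (1 - v) ⟨hn, by linarith⟩) (by positivity)
          ((by positivity : (0 : ℝ) ≤ _).trans hle₁)

lemma exists_pos_mul_setIntegral_eq_one {α : Type*} [MeasurableSpace α] {μ : Measure α}
    {s : Set α} {f : α → ℝ} (hs : MeasurableSet s) (hμs : μ s ≠ 0) (hf : ∀ x ∈ s, 0 < f x)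
    (hfi : IntegrableOn f s μ) :
    ∃ K : ℝ, 0 < K ∧ ∫ x in s, K * f x ∂μ = 1 := by
  have hI : 0 < ∫ x in s, f x ∂μ := by
    refine (setIntegral_pos_iff_support_of_nonneg_ae ?_ hfi).2 ?_
    · filter_upwards [ae_restrict_mem hs] with x hx using (hf x hx).le
    · exact (pos_iff_ne_zero.2 hμs).trans_le (measure_mono fun x hx ↦ ⟨(hf x hx).ne', hx⟩)
  exact ⟨(∫ x in s, f x ∂μ)⁻¹, inv_pos.2 hI, by rw [integral_const_mul, inv_mul_cancel₀ hI.ne']⟩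

/-- The stationary profile `f∞(v) = (1+v)^(−2+m̄/(2σ²)) (1−v)^(−2−m̄/(2σ²)) exp(−(1−m̄v)/(σ²(1−v²)))`
is positive on `(−1,1)` and integrable there, hence can be normalized to a probability density. -/
theorem stationary_solution_positive_integrable
    (σ m : ℝ) (hσ : 0 < σ) (hm : |m| < 1) (f : ℝ → ℝ)
    (hf : ∀ v : ℝ, f v =
      (1 + v) ^ (-2 + m / (2 * σ ^ 2)) * (1 - v) ^ (-2 - m / (2 * σ ^ 2)) *
        Real.exp (-(1 - m * v) / (σ ^ 2 * (1 - v ^ 2)))) :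
    (∀ v ∈ Set.Ioo (-1 : ℝ) 1, 0 < f v) ∧
    MeasureTheory.IntegrableOn f (Set.Ioo (-1 : ℝ) 1) ∧
    ∃ K : ℝ, 0 < K ∧ ∫ v in Set.Ioo (-1 : ℝ) 1, K * f v = 1 := by
  have hpos : ∀ v ∈ Ioo (-1 : ℝ) 1, 0 < f v := fun v ⟨hv₁, hv₂⟩ ↦ by
    have hp : 0 < 1 + v := by linarith
    have hn : 0 < 1 - v := by linarith
    rw [hf]
    positivity
  obtain ⟨C, hC⟩ := exists_forall_rpow_mul_rpow_mul_exp_le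
    (-2 + m / (2 * σ ^ 2)) (-2 - m / (2 * σ ^ 2)) hσ.ne' hm
  have hint : IntegrableOn f (Ioo (-1 : ℝ) 1) := by
    refine Measure.integrableOn_of_bounded (M := C) (by simp) ?_ ?_
    · rw [funext hf]; fun_prop
    · filter_upwards [ae_restrict_mem measurableSet_Ioo] with v hv
      rw [norm_of_nonneg (hpos v hv).le, hf]
      exact hC v hv
  exact ⟨hpos, hint, exists_pos_mul_setIntegral_eq_one measurableSet_Ioo (by simp) hpos hint⟩
end

section
/- Define δ : ℝ \ {0} → ℝ by δ(λ) = 1/λ + 1/(1 − e^λ). Then 0 < δ(λ) < 1 for every λ ≠ 0. -/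
/-!
Over the common denominator `λ (1 - e^λ)`, which is negative, the weight has numerator
`1 + λ - e^λ < 0`, so it is positive. The upper bound reduces to this one through the
symmetry `1 - δ(λ) = δ(-λ)`, which comes from `1 / (1 - e^{-λ}) = 1 - 1 / (1 - e^λ)`.
-/

open Real

noncomputable def changCooperWeight (l : ℝ) : ℝ := 1 / l + 1 / (1 - exp l)

lemma mul_one_sub_exp_neg {x : ℝ} (hx : x ≠ 0) : x * (1 - exp x) < 0 := by
  rcases hx.lt_or_gt with hneg | hpos
  · exact mul_neg_of_neg_of_pos hneg (sub_pos.mpr (exp_lt_one_iff.mpr hneg))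
  · exact mul_neg_of_pos_of_neg hpos (sub_neg.mpr (one_lt_exp_iff.mpr hpos))

lemma changCooperWeight_pos {l : ℝ} (hl : l ≠ 0) : 0 < changCooperWeight l := by
  have hden := mul_one_sub_exp_neg hl
  have hnum : 1 - exp l + l < 0 := by linarith [add_one_lt_exp hl]
  have hquot : changCooperWeight l = (1 - exp l + l) / (l * (1 - exp l)) := by
    have : 1 - exp l ≠ 0 := right_ne_zero_of_mul hden.ne
    rw [changCooperWeight]
    field_simp
  rw [hquot]
  exact div_pos_of_neg_of_neg hnum hden

lemma one_sub_changCooperWeight {l : ℝ} (hl : l ≠ 0) :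
    1 - changCooperWeight l = changCooperWeight (-l) := by
  have hsub : 1 - exp l ≠ 0 := right_ne_zero_of_mul (mul_one_sub_exp_neg hl).ne
  have hsub' : exp l - 1 ≠ 0 := fun h => hsub (by linarith)
  simp only [changCooperWeight, exp_neg, one_div_neg_eq_neg_one_div]
  field_simp
  ring

lemma changCooperWeight_lt_one {l : ℝ} (hl : l ≠ 0) : changCooperWeight l < 1 := by
  have := changCooperWeight_pos (neg_ne_zero.mpr hl)
  rw [← one_sub_changCooperWeight hl] at this
  linarith

/-- The Chang–Cooper weight `δ(λ) = 1/λ + 1/(1 − e^λ)` satisfies `0 < δ(λ) < 1`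
for every `λ ≠ 0`. -/
theorem chang_cooper_weight_bounds :
    ∀ l : ℝ, l ≠ 0 →
      0 < 1 / l + 1 / (1 - Real.exp l) ∧ 1 / l + 1 / (1 - Real.exp l) < 1 :=
  fun _ hl => ⟨changCooperWeight_pos hl, changCooperWeight_lt_one hl⟩
end

section
/- Let λ ≠ 0, Δv > 0, D > 0 be real numbers, set δ = 1/λ + 1/(1 − e^λ) and A = λ·D/Δv, and let f₀, f₊ be real numbers with f₀ > 0. If the numerical flux vanishes, i.e. A·((1−δ)·f₊ + δ·f₀) + D·(f₊ − f₀)/Δv = 0, then f₊ = e^(−λ)·f₀. In particular the ratio of the discrete steady state across the interface is the exponential of (minus) the cell ratio λ of drift to diffusion. -/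
/-!
Multiplying the flux by `Δv / D` and using `λ δ(λ) = 1 + λ / (1 - e^λ)`, the vanishing flux condition
collapses to `λ (f₀ - e^λ f₊) / (1 - e^λ) = 0`; since `λ ≠ 0` both factors are nonzero, so `f₀ = e^λ f₊`.
-/

open Real

lemma one_sub_exp_ne_zero {x : ℝ} (hx : x ≠ 0) : 1 - exp x ≠ 0 :=
  sub_ne_zero.mpr fun h => hx (exp_eq_one_iff x |>.mp h.symm)

lemma changCooper_scaled_flux_eq {l : ℝ} (hl : l ≠ 0) (f0 fp : ℝ) :
    l * ((1 - changCooperWeight l) * fp + changCooperWeight l * f0) + (fp - f0) =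
      l * (f0 - exp l * fp) / (1 - exp l) := by
  have hE := one_sub_exp_ne_zero hl
  unfold changCooperWeight
  field_simp
  ring

lemma eq_exp_neg_mul_of_changCooper_flux_eq_zero {l D dv f0 fp : ℝ} (hl : l ≠ 0)
    (hD : D ≠ 0) (hdv : dv ≠ 0)
    (hflux : D / dv * (l * ((1 - changCooperWeight l) * fp + changCooperWeight l * f0) +
      (fp - f0)) = 0) :
    fp = exp (-l) * f0 := by
  rw [changCooper_scaled_flux_eq hl] at hflux
  have hbalance : f0 - exp l * fp = 0 := by
    simpa [hD, hdv, hl, one_sub_exp_ne_zero hl] using hflux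
  rw [exp_neg, eq_comm, inv_mul_eq_iff_eq_mul₀ (exp_ne_zero l)]
  linarith

theorem chang_cooper_discrete_steady_state_general
    (l dv D f0 fp : ℝ) (hl : l ≠ 0) (hdv : 0 < dv) (hD : 0 < D)
    (δ A : ℝ)
    (hδ : δ = 1 / l + 1 / (1 - Real.exp l))
    (hA : A = l * D / dv)
    (hflux : A * ((1 - δ) * fp + δ * f0) + D * (fp - f0) / dv = 0) :
    fp = Real.exp (-l) * f0 := by
  refine eq_exp_neg_mul_of_changCooper_flux_eq_zero hl hD.ne' hdv.ne' ?_
  rw [← hflux, hA, hδ, changCooperWeight]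
  ring

/-- Vanishing of the Chang–Cooper numerical flux implies that the ratio of the
discrete steady state across the interface is `e^(−λ)`. -/
theorem chang_cooper_discrete_steady_state
    (l dv D f0 fp : ℝ) (hl : l ≠ 0) (hdv : 0 < dv) (hD : 0 < D) (hf0 : 0 < f0)
    (δ A : ℝ)
    (hδ : δ = 1 / l + 1 / (1 - Real.exp l))
    (hA : A = l * D / dv)
    (hflux : A * ((1 - δ) * fp + δ * f0) + D * (fp - f0) / dv = 0) :
    fp = Real.exp (-l) * f0 :=
  chang_cooper_discrete_steady_state_general l dv D f0 fp hl hdv hD δ A hδ hA hflux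
end

section
/- Let μ > 0, ν > 0, ĉ > 0 and K > 0, and define on (0,∞) the drift h(c) = (μ/2)·ln(c/ĉ)·c, the diffusion coefficient D(c) = (ν²/2)·c², and the function f∞(c) = K·c^(−2)·exp((μ/(2ν²))·(ln(c/ĉ))²). Then f∞ satisfies the zero-flux stationary equation h(c)·f∞(c) − (d/dc)[D(c)·f∞(c)] = 0 for every c ∈ (0,∞). -/
/-! The zero-flux equation `h f = (D f)'` says that `D f` solves the linear equation
`g' = (h / D) g`, so it holds as soon as `D f = C · exp Φ` with `Φ' = h / D`. Here
`h / D = μ ln(c/ĉ) / (ν² c)`, whose primitive is `(μ / (2ν²)) ln²(c/ĉ)`, and the factor `c⁻²`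
in `f∞` cancels `D`, leaving `D f∞ = (ν² K / 2) exp((μ / (2ν²)) ln²(c/ĉ))`. -/

open Filter Topology

theorem mul_sub_deriv_mul_eq_zero_of_eventuallyEq_exp {h D f Φ : ℝ → ℝ} {C c : ℝ}
    (hDf : ∀ᶠ s in 𝓝 c, D s * f s = C * Real.exp (Φ s)) (hΦ : HasDerivAt Φ (h c / D c) c)
    (hDc : D c ≠ 0) :
    h c * f c - deriv (fun s => D s * f s) c = 0 := by
  have hderiv : HasDerivAt (fun s => D s * f s) (C * (Real.exp (Φ c) * (h c / D c))) c :=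
    (hΦ.exp.const_mul C).congr_of_eventuallyEq hDf
  rw [hderiv.deriv, ← mul_assoc, ← hDf.self_of_nhds]
  field_simp
  ring

theorem Real.hasDerivAt_log_div_const {c c₀ : ℝ} (hc : c ≠ 0) (hc₀ : c₀ ≠ 0) :
    HasDerivAt (fun s => Real.log (s / c₀)) c⁻¹ c := by
  refine (((hasDerivAt_id c).div_const c₀).log (div_ne_zero hc hc₀)).congr_deriv ?_
  simp [field]

theorem contact_stationary_zero_flux_general
    (μ ν c₀ K : ℝ) (hν : 0 < ν) (hc₀ : 0 < c₀)
    (h D f : ℝ → ℝ)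
    (hh : ∀ c : ℝ, h c = μ / 2 * Real.log (c / c₀) * c)
    (hD : ∀ c : ℝ, D c = ν ^ 2 / 2 * c ^ 2)
    (hf : ∀ c : ℝ, f c =
      K * c ^ (-2 : ℝ) * Real.exp (μ / (2 * ν ^ 2) * Real.log (c / c₀) ^ 2)) :
    ∀ c ∈ Set.Ioi (0 : ℝ), h c * f c - deriv (fun s => D s * f s) c = 0 := by
  intro c hc
  have hc0 : c ≠ 0 := ne_of_gt hc
  refine mul_sub_deriv_mul_eq_zero_of_eventuallyEq_exp (C := ν ^ 2 / 2 * K)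
    (Φ := fun s => μ / (2 * ν ^ 2) * Real.log (s / c₀) ^ 2) ?_ ?_ (by rw [hD]; positivity)
  · filter_upwards [eventually_ne_nhds hc0] with s hs
    rw [hD, hf, show (-2 : ℝ) = ((-2 : ℤ) : ℝ) by norm_num, Real.rpow_intCast]
    field_simp
  · refine (((Real.hasDerivAt_log_div_const hc0 hc₀.ne').pow 2).const_mul _).congr_deriv ?_
    rw [hh, hD]
    field_simp
    ring

/-- For the contact dynamics with drift `h(c) = (μ/2) ln(c/c₀) c` and diffusion
`D(c) = (ν²/2) c²`, the function `f∞(c) = K c^(−2) exp((μ/(2ν²)) (ln(c/c₀))²)`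
satisfies the zero-flux stationary equation `h f∞ − (D f∞)' = 0` on `(0,∞)`. -/
theorem contact_stationary_zero_flux
    (μ ν c₀ K : ℝ) (hμ : 0 < μ) (hν : 0 < ν) (hc₀ : 0 < c₀) (hK : 0 < K)
    (h D f : ℝ → ℝ)
    (hh : ∀ c : ℝ, h c = μ / 2 * Real.log (c / c₀) * c)
    (hD : ∀ c : ℝ, D c = ν ^ 2 / 2 * c ^ 2)
    (hf : ∀ c : ℝ, f c =
      K * c ^ (-2 : ℝ) * Real.exp (μ / (2 * ν ^ 2) * Real.log (c / c₀) ^ 2)) :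
    ∀ c ∈ Set.Ioi (0 : ℝ), h c * f c - deriv (fun s => D s * f s) c = 0 :=
  contact_stationary_zero_flux_general μ ν c₀ K hν hc₀ h D f hh hD hf
end
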